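/- With G(t,z) defined as above, for any 0 ≤ z₁ < z₂ ≤ 1 and t ≥ 0: (1−γ)(z₂−z₁) ≤ G(t,z₂) − G(t,z₁) ≤ (1+γ)(z₂−z₁), where γ = 2α + β/ω' < 1. In particular, for fixed t the map z ↦ G(t,z) is a strictly increasing bi-Lipschitz homeomorphism onto its image, so continuum particles never collide. -/

import Mathlib

/-!
In the characteristic directions `(1/(2c), 1/2)` and `(-1/(2c), 1/2)` the mixed second derivative
of a solution of `q_tt = c² q_xx` vanishes, so `q t x = f (x + c t) + g (x - c t)`. The Dirichlet
conditions force `g (-y) = -f y` and make `f` 2-periodic, and on `[0, 1]` the initial data fix the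
odd and even parts of `f - f 0` as `(X - 1)/2` and `(∫₀ˣ V)/(2c)`. By Rolle, `|X - 1| ≤ ∫₀¹ |X''|`
and `|V| ≤ ∫₀¹ |V''|` on `[0, 1]`, whence `|q| ≤ α + β/c ≤ γ` everywhere, and
`G(t,z₂) - G(t,z₁) = (z₂ - z₁) + ∫_{z₁}^{z₂} q t`.
-/

open Function Set intervalIntegral Interval

theorem abs_deriv_le_integral_abs_deriv_deriv {f : ℝ → ℝ} (hf : ContDiff ℝ 2 f) {a b : ℝ}
    (hab : a < b) (hfab : f a = f b) {y : ℝ} (hy : y ∈ Icc a b) :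
    |deriv f y| ≤ ∫ s in a..b, |deriv (deriv f) s| := by
  have hf' : ContDiff ℝ 1 (deriv f) := hf.iterate_deriv' 1 1
  have hf'' : Continuous (deriv (deriv f)) := hf'.continuous_deriv le_rfl
  obtain ⟨ξ, hξ, hξ0⟩ := exists_deriv_eq_zero hab hf.continuous.continuousOn hfab
  have hftc : ∫ s in ξ..y, deriv (deriv f) s = deriv f y :=
    calc _ = deriv f y - deriv f ξ :=
          integral_deriv_eq_sub (fun s _ => (hf'.differentiable one_ne_zero) s)
            (hf''.intervalIntegrable _ _)
      _ = deriv f y := by rw [hξ0, sub_zero]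
  have hsub : Ι ξ y ⊆ Ι a b := uIoc_subset_uIoc_of_uIcc_subset_uIcc
    (by rw [uIcc_of_le hab.le]; exact uIcc_subset_Icc ⟨hξ.1.le, hξ.2.le⟩ hy)
  calc |deriv f y| = |∫ s in ξ..y, deriv (deriv f) s| := by rw [hftc]
    _ ≤ |(∫ s in ξ..y, |deriv (deriv f) s|)| :=
        norm_integral_le_abs_integral_norm (f := deriv (deriv f))
    _ ≤ |(∫ s in a..b, |deriv (deriv f) s|)| :=
        abs_integral_mono_interval hsub (Filter.Eventually.of_forall fun _ => abs_nonneg _)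
          (hf''.abs.intervalIntegrable _ _)
    _ = ∫ s in a..b, |deriv (deriv f) s| :=
        abs_of_nonneg (integral_nonneg hab.le fun _ _ => abs_nonneg _)

theorem abs_sub_le_integral_abs_deriv_deriv {f : ℝ → ℝ} (hf : ContDiff ℝ 2 f) {a b : ℝ}
    (hab : a < b) (hfab : f a = f b) {x : ℝ} (hx : x ∈ Icc a b) :
    |f x - f a| ≤ (b - a) * ∫ s in a..b, |deriv (deriv f) s| := by
  have hA : 0 ≤ ∫ s in a..b, |deriv (deriv f) s| := integral_nonneg hab.le fun _ _ => abs_nonneg _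
  calc |f x - f a| ≤ (∫ s in a..b, |deriv (deriv f) s|) * (x - a) :=
        norm_image_sub_le_of_norm_deriv_le_segment'
          (fun y _ => ((hf.differentiable two_ne_zero) y).hasDerivAt.hasDerivWithinAt)
          (fun y hy => abs_deriv_le_integral_abs_deriv_deriv hf hab hfab (Ico_subset_Icc_self hy))
          x hx
    _ ≤ (b - a) * ∫ s in a..b, |deriv (deriv f) s| := by
        rw [mul_comm]; gcongr; exact hx.2

theorem abs_integral_le_integral_abs_deriv_deriv {f : ℝ → ℝ} (hf : ContDiff ℝ 2 f) {a b : ℝ}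
    (hab : a < b) (ha : f a = 0) (hb : f b = 0) {x : ℝ} (hx : x ∈ Icc a b) :
    |∫ s in a..x, f s| ≤ (b - a) ^ 2 * ∫ s in a..b, |deriv (deriv f) s| := by
  have hbound : ∀ s ∈ Ι a x, ‖f s‖ ≤ (b - a) * ∫ s in a..b, |deriv (deriv f) s| := by
    intro s hs
    rw [uIoc_of_le hx.1] at hs
    simpa [ha] using
      abs_sub_le_integral_abs_deriv_deriv hf hab (ha.trans hb.symm) ⟨hs.1.le, hs.2.trans hx.2⟩
  have hA : 0 ≤ ∫ s in a..b, |deriv (deriv f) s| := integral_nonneg hab.le fun _ _ => abs_nonneg _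
  calc |∫ s in a..x, f s| ≤ (b - a) * (∫ s in a..b, |deriv (deriv f) s|) * |x - a| :=
        norm_integral_le_of_norm_le_const hbound
    _ ≤ (b - a) * (∫ s in a..b, |deriv (deriv f) s|) * (b - a) := by
        rw [abs_of_nonneg (sub_nonneg.2 hx.1)]
        gcongr
        exact hx.2
    _ = (b - a) ^ 2 * ∫ s in a..b, |deriv (deriv f) s| := by ring

section LineDerivatives

variable {E F : Type*} [NormedAddCommGroup E] [NormedSpace ℝ E]
  [NormedAddCommGroup F] [NormedSpace ℝ F] {u : E → F}

theorem hasDerivAt_comp_add_smul (hu : Differentiable ℝ u) (p v : E) (s : ℝ) :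
    HasDerivAt (fun s : ℝ => u (p + s • v)) (fderiv ℝ u (p + s • v) v) s := by
  have hline : HasDerivAt (fun s : ℝ => p + s • v) v s := by
    simpa using ((hasDerivAt_id s).smul_const v).const_add p
  exact (hu _).hasFDerivAt.comp_hasDerivAt s hline

theorem hasDerivAt_fderiv_comp_add_smul (hu : ContDiff ℝ 2 u) (p v w : E) (s : ℝ) :
    HasDerivAt (fun s : ℝ => fderiv ℝ u (p + s • v) w)
      (fderiv ℝ (fderiv ℝ u) (p + s • v) v w) s := by
  have hu' : Differentiable ℝ (fderiv ℝ u) :=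
    (hu.fderiv_right (m := 1) le_rfl).differentiable one_ne_zero
  simpa using (hasDerivAt_comp_add_smul hu' p v s).clm_apply (hasDerivAt_const s w)

theorem deriv_deriv_comp_add_smul (hu : ContDiff ℝ 2 u) (p v : E) (s : ℝ) :
    deriv (deriv fun s : ℝ => u (p + s • v)) s = fderiv ℝ (fderiv ℝ u) (p + s • v) v v := by
  have hderiv : deriv (fun s : ℝ => u (p + s • v)) = fun s => fderiv ℝ u (p + s • v) v :=
    funext fun s => (hasDerivAt_comp_add_smul (hu.differentiable two_ne_zero) p v s).deriv
  rw [hderiv]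
  exact (hasDerivAt_fderiv_comp_add_smul hu p v v s).deriv

theorem add_smul_add_smul_of_fderiv_fderiv_eq_zero (hu : ContDiff ℝ 2 u) {v w : E}
    (h : ∀ p, fderiv ℝ (fderiv ℝ u) p v w = 0) (p : E) (a b : ℝ) :
    u (p + a • v + b • w) = u (p + a • v) + u (p + b • w) - u p := by
  have hu₁ := hu.differentiable two_ne_zero
  have hw_const : ∀ b : ℝ, fderiv ℝ u (p + b • w + a • v) w = fderiv ℝ u (p + b • w) w := by
    intro b
    have hd := hasDerivAt_fderiv_comp_add_smul hu (p + b • w) v w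
    simpa using is_const_of_deriv_eq_zero (fun s => (hd s).differentiableAt)
      (fun s => (hd s).deriv.trans (h _)) a 0
  have hdiff : ∀ b : ℝ, HasDerivAt (fun b : ℝ => u (p + a • v + b • w) - u (p + b • w)) 0 b := by
    intro b
    have hd := (hasDerivAt_comp_add_smul hu₁ (p + a • v) w b).sub
      (hasDerivAt_comp_add_smul hu₁ p w b)
    rwa [add_right_comm, hw_const, sub_self] at hd
  have hconst := is_const_of_deriv_eq_zero (fun b => (hdiff b).differentiableAt)
    (fun b => (hdiff b).deriv) b 0
  simp only [zero_smul, add_zero] at hconst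
  rw [← sub_add_cancel (u (p + a • v + b • w)) (u (p + b • w)), hconst]
  abel

end LineDerivatives

theorem exists_dAlembert {c : ℝ} (hc : c ≠ 0) {q : ℝ → ℝ → ℝ} (hq : ContDiff ℝ 2 (uncurry q))
    (hwave : ∀ t x, deriv (deriv fun s => q s x) t = c ^ 2 * deriv (deriv fun y => q t y) x) :
    ∃ f g : ℝ → ℝ, Differentiable ℝ f ∧ ∀ t x, q t x = f (x + c * t) + g (x - c * t) := by
  set B := fderiv ℝ (fderiv ℝ (uncurry q))
  have hB : ∀ p, B p (1, 0) (1, 0) = c ^ 2 * B p (0, 1) (0, 1) := by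
    rintro ⟨t, x⟩
    have htt := deriv_deriv_comp_add_smul hq ((0 : ℝ), x) (1, 0) t
    have hxx := deriv_deriv_comp_add_smul hq (t, (0 : ℝ)) (0, 1) x
    simp only [Prod.smul_mk, smul_eq_mul, mul_one, mul_zero, Prod.mk_add_mk, zero_add, add_zero,
      uncurry_apply_pair] at htt hxx
    rw [← htt, ← hxx]
    exact hwave t x
  -- characteristic directions: `(t, x) = (x + c t) • v + (x - c t) • w`
  set v : ℝ × ℝ := ((2 * c)⁻¹, 2⁻¹)
  set w : ℝ × ℝ := (-(2 * c)⁻¹, 2⁻¹)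
  have hvw : ∀ p, B p v w = 0 := by
    intro p
    have hsymm : B p (1, 0) (0, 1) = B p (0, 1) (1, 0) :=
      hq.contDiffAt.isSymmSndFDerivAt (by simp) _ _
    have hv : v = (2 * c)⁻¹ • ((1 : ℝ), (0 : ℝ)) + (2⁻¹ : ℝ) • ((0 : ℝ), (1 : ℝ)) := by simp [v]
    have hw : w = -(2 * c)⁻¹ • ((1 : ℝ), (0 : ℝ)) + (2⁻¹ : ℝ) • ((0 : ℝ), (1 : ℝ)) := by simp [w]
    rw [hv, hw]
    simp only [map_add, map_smul, add_apply, smul_apply, smul_eq_mul, hB p, hsymm]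
    field_simp
    ring
  refine ⟨fun y => uncurry q (y • v) - uncurry q 0, fun y => uncurry q (y • w), ?_, fun t x => ?_⟩
  · exact ((hq.differentiable two_ne_zero).comp (differentiable_id.smul_const v)).sub_const _
  · have h := add_smul_add_smul_of_fderiv_fderiv_eq_zero hq hvw 0 (x + c * t) (x - c * t)
    have hp : (x + c * t) • v + (x - c * t) • w = (t, x) := by
      ext <;> simp only [Prod.smul_mk, smul_eq_mul, Prod.mk_add_mk, v, w] <;> field_simp <;> ring
    simp only [zero_add] at h
    rw [hp] at h
    simp only [uncurry_apply_pair] at h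
    rw [h]
    ring

theorem exists_periodic_dAlembert {c : ℝ} (hc : c ≠ 0) {q : ℝ → ℝ → ℝ}
    (hq : ContDiff ℝ 2 (uncurry q))
    (hwave : ∀ t x, deriv (deriv fun s => q s x) t = c ^ 2 * deriv (deriv fun y => q t y) x)
    (h0 : ∀ t, q t 0 = 0) (h1 : ∀ t, q t 1 = 0) :
    ∃ f : ℝ → ℝ, Differentiable ℝ f ∧ Periodic f 2 ∧
      ∀ t x, q t x = f (x + c * t) - f (c * t - x) := by
  obtain ⟨f, g, hf, hfg⟩ := exists_dAlembert hc hq hwave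
  have hc_div : ∀ y, c * (y / c) = y := fun y => mul_div_cancel₀ y hc
  have hg : ∀ y, g (-y) = -f y := by
    intro y
    have h := hfg (y / c) 0
    rw [h0, hc_div, zero_add, zero_sub] at h
    linarith
  have hq' : ∀ t x, q t x = f (x + c * t) - f (c * t - x) := by
    intro t x
    rw [hfg, ← neg_sub, hg]
    ring
  refine ⟨f, hf, fun y => ?_, hq'⟩
  have h := hq' ((y + 1) / c) 1
  rw [h1, hc_div, add_sub_cancel_right, add_comm, add_assoc, one_add_one_eq_two] at h
  linarith

theorem abs_sub_le_of_periodic {f : ℝ → ℝ} (hf : Periodic f 2) {a b : ℝ}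
    (hodd : ∀ y ∈ Icc (0 : ℝ) 1, |f y - f (-y)| ≤ a)
    (heven : ∀ y ∈ Icc (0 : ℝ) 1, |f y + f (-y) - 2 * f 0| ≤ b) (y : ℝ) :
    |f y - f 0| ≤ (a + b) / 2 := by
  have hsym : ∀ z ∈ Icc (0 : ℝ) 1, |f z - f 0| ≤ (a + b) / 2 ∧ |f (-z) - f 0| ≤ (a + b) / 2 := by
    intro z hz
    have h₁ := abs_le.mp (hodd z hz)
    have h₂ := abs_le.mp (heven z hz)
    constructor <;> rw [abs_le] <;> constructor <;> linarith
  obtain ⟨z, hz, hfz⟩ := hf.exists_mem_Ico two_pos y (-1)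
  rw [hfz]
  rcases le_total 0 z with h | h
  · exact (hsym z ⟨h, by linarith [hz.2]⟩).1
  · simpa using (hsym (-z) ⟨by linarith, by linarith [hz.1]⟩).2

theorem abs_le_of_wave_dirichlet {c : ℝ} (hc : 0 < c) {q : ℝ → ℝ → ℝ}
    (hq : ContDiff ℝ 2 (uncurry q))
    (hwave : ∀ t x, deriv (deriv fun s => q s x) t = c ^ 2 * deriv (deriv fun y => q t y) x)
    (h0 : ∀ t, q t 0 = 0) (h1 : ∀ t, q t 1 = 0) {φ ψ : ℝ → ℝ} (hψ : Continuous ψ)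
    (hqφ : ∀ x, q 0 x = φ x) (hqψ : ∀ x, deriv (fun s => q s x) 0 = ψ x) {a b : ℝ}
    (ha : ∀ x ∈ Icc (0 : ℝ) 1, |φ x| ≤ a) (hb : ∀ x ∈ Icc (0 : ℝ) 1, |∫ s in 0..x, ψ s| ≤ b)
    (t x : ℝ) : |q t x| ≤ a + b / c := by
  obtain ⟨f, hf, hper, hq'⟩ := exists_periodic_dAlembert hc.ne' hq hwave h0 h1
  have hodd : ∀ y, f y - f (-y) = φ y := fun y => by simp [← hqφ, hq']
  have hvel : ∀ y, HasDerivAt (fun y => f y + f (-y)) (ψ y / c) y := by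
    intro y
    have hqt : HasDerivAt (fun s => q s y) (c * (deriv f y - deriv f (-y))) 0 := by
      have hin : HasDerivAt (fun s => y + c * s) c 0 := by
        simpa using ((hasDerivAt_id (0 : ℝ)).const_mul c).const_add y
      have hout : HasDerivAt (fun s => c * s - y) c 0 := by
        simpa using ((hasDerivAt_id (0 : ℝ)).const_mul c).sub_const y
      have hd := ((hf _).hasDerivAt.comp 0 hin).sub ((hf _).hasDerivAt.comp 0 hout)
      simp only [mul_zero, add_zero, zero_sub] at hd
      rw [show (fun s => q s y) = fun s => f (y + c * s) - f (c * s - y) from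
        funext fun s => hq' s y]
      exact hd.congr_deriv (by ring)
    have hψy : ψ y = c * (deriv f y - deriv f (-y)) := by rw [← hqψ, hqt.deriv]
    have hd := (hf y).hasDerivAt.add ((hf (-y)).hasDerivAt.comp y (hasDerivAt_neg y))
    exact hd.congr_deriv (by rw [hψy]; field_simp; ring)
  have heven : ∀ y, f y + f (-y) - 2 * f 0 = (∫ s in 0..y, ψ s) / c := by
    intro y
    rw [← integral_div, integral_eq_sub_of_hasDerivAt (fun s _ => hvel s)
      ((hψ.div_const c).intervalIntegrable 0 y), neg_zero]
    ring
  have hf0 : ∀ y, |f y - f 0| ≤ (a + b / c) / 2 := abs_sub_le_of_periodic hper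
    (fun y hy => hodd y ▸ ha y hy)
    (fun y hy => by rw [heven, abs_div, abs_of_pos hc]; gcongr; exact hb y hy)
  calc |q t x| = |(f (x + c * t) - f 0) - (f (c * t - x) - f 0)| := by rw [hq']; ring_nf
    _ ≤ |f (x + c * t) - f 0| + |f (c * t - x) - f 0| := abs_sub _ _
    _ ≤ a + b / c := by linarith [hf0 (x + c * t), hf0 (c * t - x)]

theorem stmt_14_general (ω' v : ℝ) (hω : 0 < ω')
    (X V : ℝ → ℝ) (hX : ContDiff ℝ 4 X) (hV : ContDiff ℝ 4 V)
    (hX0 : X 0 = 1) (hX1 : X 1 = 1) (hV0 : V 0 = 0) (hV1 : V 1 = 0)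
    (q : ℝ → ℝ → ℝ) (hq : ContDiff ℝ 2 (Function.uncurry q))
    (hwave : ∀ t x : ℝ, deriv (deriv (fun s => q s x)) t
      = ω'^2 * deriv (deriv (fun y => q t y)) x)
    (hqb0 : ∀ t, q t 0 = 0) (hqb1 : ∀ t, q t 1 = 0)
    (hqi : ∀ x, q 0 x = X x - 1) (hqit : ∀ x, deriv (fun s => q s x) 0 = V x)
    (G : ℝ → ℝ → ℝ)
    (hG : ∀ t z : ℝ, G t z =
      (v * t + ω'^2 * ∫ s in (0:ℝ)..t, (t - s) * deriv (fun y => q s y) 0)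
        + z + ∫ x' in (0:ℝ)..z, q t x')
    (α β γ : ℝ)
    (hα : α = ∫ s in (0:ℝ)..1, |deriv (deriv X) s|)
    (hβ : β = ∫ s in (0:ℝ)..1, |deriv (deriv V) s|)
    (hγ : γ = 2 * α + β / ω') :
    ∀ t : ℝ, 0 ≤ t → ∀ z₁ z₂ : ℝ, 0 ≤ z₁ → z₁ < z₂ → z₂ ≤ 1 →
      (1 - γ) * (z₂ - z₁) ≤ G t z₂ - G t z₁ ∧
      G t z₂ - G t z₁ ≤ (1 + γ) * (z₂ - z₁) := by
  intro t _ z₁ z₂ _ hz _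
  have hα0 : 0 ≤ α := hα ▸ integral_nonneg zero_le_one fun _ _ => abs_nonneg _
  have hXα : ∀ x ∈ Icc (0 : ℝ) 1, |X x - 1| ≤ α := fun x hx => by
    simpa [hX0, ← hα] using abs_sub_le_integral_abs_deriv_deriv (hX.of_le (by norm_num))
      zero_lt_one (hX0.trans hX1.symm) hx
  have hVβ : ∀ x ∈ Icc (0 : ℝ) 1, |∫ s in 0..x, V s| ≤ β := fun x hx => by
    simpa [← hβ] using abs_integral_le_integral_abs_deriv_deriv (hV.of_le (by norm_num))
      zero_lt_one hV0 hV1 hx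
  have hqγ : ∀ x, |q t x| ≤ γ := fun x => by
    have := abs_le_of_wave_dirichlet hω hq hwave hqb0 hqb1 hV.continuous hqi hqit hXα hVβ t x
    rw [hγ]
    linarith
  have hcont : Continuous (q t) := hq.continuous.comp (Continuous.prodMk_right t)
  have hdiff : G t z₂ - G t z₁ = (z₂ - z₁) + ∫ x in z₁..z₂, q t x := by
    rw [hG, hG, ← integral_add_adjacent_intervals (hcont.intervalIntegrable 0 z₁)
      (hcont.intervalIntegrable z₁ z₂)]
    ring
  have hint : |∫ x in z₁..z₂, q t x| ≤ γ * (z₂ - z₁) := by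
    simpa [abs_of_pos (sub_pos.2 hz)] using
      norm_integral_le_of_norm_le_const (a := z₁) (b := z₂) fun x _ => (Real.norm_eq_abs _).trans_le (hqγ x)
  rw [hdiff]
  constructor <;> linarith [abs_le.mp hint]

/-- Non-collision of continuum particles: with `γ = 2α + β/ω' < 1` and `G` built from
the wave-equation solution `q` as before, for all `t ≥ 0` and `0 ≤ z₁ < z₂ ≤ 1`,
`(1-γ)(z₂-z₁) ≤ G(t,z₂) - G(t,z₁) ≤ (1+γ)(z₂-z₁)`; in particular `G(t,·)` is
strictly increasing on `[0,1]`. -/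
theorem stmt_14 (ω' v : ℝ) (hω : 0 < ω')
    (X V : ℝ → ℝ) (hX : ContDiff ℝ 4 X) (hV : ContDiff ℝ 4 V)
    (hX0 : X 0 = 1) (hX1 : X 1 = 1) (hV0 : V 0 = 0) (hV1 : V 1 = 0)
    (q : ℝ → ℝ → ℝ) (hq : ContDiff ℝ 2 (Function.uncurry q))
    (hwave : ∀ t x : ℝ, deriv (deriv (fun s => q s x)) t
      = ω'^2 * deriv (deriv (fun y => q t y)) x)
    (hqb0 : ∀ t, q t 0 = 0) (hqb1 : ∀ t, q t 1 = 0)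
    (hqi : ∀ x, q 0 x = X x - 1) (hqit : ∀ x, deriv (fun s => q s x) 0 = V x)
    (G : ℝ → ℝ → ℝ)
    (hG : ∀ t z : ℝ, G t z =
      (v * t + ω'^2 * ∫ s in (0:ℝ)..t, (t - s) * deriv (fun y => q s y) 0)
        + z + ∫ x' in (0:ℝ)..z, q t x')
    (α β γ : ℝ)
    (hα : α = ∫ s in (0:ℝ)..1, |deriv (deriv X) s|)
    (hβ : β = ∫ s in (0:ℝ)..1, |deriv (deriv V) s|)
    (hγ : γ = 2 * α + β / ω') (hγ1 : γ < 1) :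
    ∀ t : ℝ, 0 ≤ t → ∀ z₁ z₂ : ℝ, 0 ≤ z₁ → z₁ < z₂ → z₂ ≤ 1 →
      (1 - γ) * (z₂ - z₁) ≤ G t z₂ - G t z₁ ∧
      G t z₂ - G t z₁ ≤ (1 + γ) * (z₂ - z₁) :=
  stmt_14_general ω' v hω X V hX hV hX0 hX1 hV0 hV1 q hq hwave hqb0 hqb1 hqi hqit G hG α β γ hα hβ
    hγ
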